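/- (False positive of the GBLP distinguishability test) Consider the qubit map with T = 0 and translation c = (0,0,c₃), |c₃| ≤ 1, which sends every Bloch vector to c. For any Bloch vectors r₁, r₂ with ‖r₁‖ ≤ 1, ‖r₂‖ ≤ 1, the evolved Bloch vectors are equal (both equal c), yet for every p ∈ [0,1] with p ≠ 1/2 and q = 1-p, the generalized trace distance of the outputs is max(‖p c - q c‖, |p-q|) = |p-q| > 0. -/

import Mathlib

noncomputable section

/-- The action of a qubit dynamical map, given by a real 3×3 matrix,
on Bloch vectors in ℝ³. -/
def act (T : Matrix (Fin 3) (Fin 3) ℝ) (r : EuclideanSpace ℝ (Fin 3)) :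
    EuclideanSpace ℝ (Fin 3) :=
  WithLp.toLp 2 (T.mulVec r)

theorem act_zero (r : EuclideanSpace ℝ (Fin 3)) : act 0 r = 0 := by
  simp [act]

theorem EuclideanSpace.norm_toLp_zero_zero (a : ℝ) :
    ‖(WithLp.toLp 2 ![0, 0, a] : EuclideanSpace ℝ (Fin 3))‖ = |a| := by
  simp [EuclideanSpace.norm_eq, Fin.sum_univ_three, Real.sqrt_sq_eq_abs]

theorem norm_smul_sub_smul_le_abs_sub {E : Type*} [SeminormedAddCommGroup E] [NormedSpace ℝ E]
    {c : E} (hc : ‖c‖ ≤ 1) (p q : ℝ) : ‖p • c - q • c‖ ≤ |p - q| := by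
  rw [← sub_smul, norm_smul, Real.norm_eq_abs]
  exact mul_le_of_le_one_right (abs_nonneg _) hc

theorem abs_sub_one_sub_pos {p : ℝ} (hp : p ≠ 1 / 2) : 0 < |p - (1 - p)| :=
  abs_pos.mpr fun h => hp (by linarith)

theorem gblp_false_positive_general (c₃ : ℝ) (hc : |c₃| ≤ 1)
    (r₁ r₂ : EuclideanSpace ℝ (Fin 3)) :
    let c : EuclideanSpace ℝ (Fin 3) := WithLp.toLp 2 ![0, 0, c₃]
    (act (0 : Matrix (Fin 3) (Fin 3) ℝ) r₁ + c = c)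
    ∧ (act (0 : Matrix (Fin 3) (Fin 3) ℝ) r₂ + c = c)
    ∧ ∀ p : ℝ, p ∈ Set.Icc (0 : ℝ) 1 → p ≠ 1 / 2 → ∀ q : ℝ, q = 1 - p →
        max ‖p • c - q • c‖ |p - q| = |p - q| ∧ 0 < |p - q| := by
  intro c
  have hc_norm : ‖c‖ ≤ 1 := (EuclideanSpace.norm_toLp_zero_zero c₃).trans_le hc
  refine ⟨by rw [act_zero, zero_add], by rw [act_zero, zero_add], ?_⟩
  rintro p - hp q rfl
  exact ⟨max_eq_right (norm_smul_sub_smul_le_abs_sub hc_norm p _), abs_sub_one_sub_pos hp⟩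

/-- (False positive of the GBLP distinguishability test.) For the qubit map with T = 0
and translation c = (0,0,c₃), |c₃| ≤ 1, every Bloch vector is sent to c, so the evolved
states of any r₁, r₂ coincide; yet for every p ∈ [0,1] with p ≠ 1/2 and q = 1-p, the
generalized trace distance of the outputs is max(‖p c - q c‖, |p-q|) = |p-q| > 0. -/
theorem gblp_false_positive (c₃ : ℝ) (hc : |c₃| ≤ 1)
    (r₁ r₂ : EuclideanSpace ℝ (Fin 3)) (h₁ : ‖r₁‖ ≤ 1) (h₂ : ‖r₂‖ ≤ 1) :
    let c : EuclideanSpace ℝ (Fin 3) := WithLp.toLp 2 ![0, 0, c₃]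
    (act (0 : Matrix (Fin 3) (Fin 3) ℝ) r₁ + c = c)
    ∧ (act (0 : Matrix (Fin 3) (Fin 3) ℝ) r₂ + c = c)
    ∧ ∀ p : ℝ, p ∈ Set.Icc (0 : ℝ) 1 → p ≠ 1 / 2 → ∀ q : ℝ, q = 1 - p →
        max ‖p • c - q • c‖ |p - q| = |p - q| ∧ 0 < |p - q| :=
  gblp_false_positive_general c₃ hc r₁ r₂
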